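/- Let μ be the normalized Lebesgue measure on [-π,π]^d, let Θ be a set with a distinguished point θ₀, and for each θ ∈ Θ and k ≥ 1 let f_{θ,k} : [-π,π]^d → (0,∞) be measurable with log f_{θ,k} integrable and satisfying the normalization ∫ log f_{θ,k} dμ = 0; assume f_{θ₀,k}/f_{θ,k} is μ-integrable for all θ, k, and assume the identifiability condition: for every θ ≠ θ₀ there exists k ≥ 1 such that the set {ω : f_{θ,k}(ω) ≠ f_{θ₀,k}(ω)} has positive μ-measure. Define W(θ) = sup_{k≥1} ∫ f_{θ₀,k}/f_{θ,k} dμ. Then W(θ₀) = 1, W(θ) > 1 for every θ ≠ θ₀, and hence inf_{θ∈Θ} W(θ) = 1 is attained only at θ = θ₀. -/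

import Mathlib

/-!
Writing `g = f_{θ₀,k} / f_{θ,k}`, the normalization gives `∫ log g dμ = 0`. Since `log x ≤ x - 1`
with equality only at `x = 1`, the nonnegative function `g - 1 - log g` has integral `∫ g dμ - 1`,
which is positive as soon as `g ≠ 1` on a set of positive measure. Identifiability supplies such a
`k` for every `θ ≠ θ₀`, while for `θ = θ₀` every ratio is identically `1`.
-/

open MeasureTheory
open scoped ENNReal

/-- The normalized Lebesgue measure `(2π)^{-d} · Leb` on the cube `[-π,π]^d`
(a probability measure). -/
noncomputable def normCube (d : ℕ) : Measure (Fin d → ℝ) :=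
  (ENNReal.ofReal ((2 * Real.pi) ^ d))⁻¹ •
    (volume.restrict (Set.Icc (fun _ => -Real.pi) (fun _ => Real.pi)))

instance isProbabilityMeasure_normCube (d : ℕ) : IsProbabilityMeasure (normCube d) := by
  constructor
  have hvol : volume (Set.Icc (fun _ : Fin d => -Real.pi) (fun _ => Real.pi))
      = ENNReal.ofReal ((2 * Real.pi) ^ d) := by
    rw [Real.volume_Icc_pi]
    simp [ENNReal.ofReal_pow, two_mul, Real.pi_nonneg]
  rw [normCube, Measure.smul_apply, Measure.restrict_apply_univ, hvol, smul_eq_mul,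
    ENNReal.inv_mul_cancel _ ENNReal.ofReal_ne_top]
  exact (ENNReal.ofReal_pos.2 (pow_pos Real.two_pi_pos d)).ne'

section LogIntegral

variable {α : Type*} [MeasurableSpace α] {μ : Measure α} [IsProbabilityMeasure μ] {g : α → ℝ}

theorem integral_log_lt_integral_sub_one (hg : ∀ x, 0 < g x) (hgi : Integrable g μ)
    (hlog : Integrable (fun x => Real.log (g x)) μ) (hne : 0 < μ {x | g x ≠ 1}) :
    ∫ x, Real.log (g x) ∂μ < (∫ x, g x ∂μ) - 1 := by
  set h : α → ℝ := fun x => g x - 1 - Real.log (g x)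
  have h_nonneg : 0 ≤ h := fun x => sub_nonneg.2 (Real.log_le_sub_one_of_pos (hg x))
  have hgi_sub : Integrable (fun x => g x - 1) μ := hgi.sub (integrable_const 1)
  have h_int : Integrable h μ := hgi_sub.sub hlog
  have h_support : Function.support h = {x | g x ≠ 1} := by
    ext x
    refine ⟨fun hx hgx => hx (by simp [h, hgx]), fun hgx => ?_⟩
    exact (sub_pos.2 (Real.log_lt_sub_one_of_pos (hg x) hgx)).ne'
  have h_pos : 0 < ∫ x, h x ∂μ :=
    (integral_pos_iff_support_of_nonneg h_nonneg h_int).2 (h_support ▸ hne)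
  rw [integral_sub hgi_sub hlog, integral_sub hgi (integrable_const 1), integral_const,
    probReal_univ, smul_eq_mul, mul_one] at h_pos
  linarith

theorem one_lt_integral_div_of_integral_log_eq_zero {f₀ f₁ : α → ℝ}
    (hf₀ : ∀ x, 0 < f₀ x) (hf₁ : ∀ x, 0 < f₁ x)
    (hlog₀ : Integrable (fun x => Real.log (f₀ x)) μ)
    (hlog₁ : Integrable (fun x => Real.log (f₁ x)) μ)
    (hmean₀ : ∫ x, Real.log (f₀ x) ∂μ = 0) (hmean₁ : ∫ x, Real.log (f₁ x) ∂μ = 0)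
    (hdiv : Integrable (fun x => f₀ x / f₁ x) μ) (hne : 0 < μ {x | f₁ x ≠ f₀ x}) :
    1 < ∫ x, f₀ x / f₁ x ∂μ := by
  have hlog_div : ∀ x, Real.log (f₀ x / f₁ x) = Real.log (f₀ x) - Real.log (f₁ x) :=
    fun x => Real.log_div (hf₀ x).ne' (hf₁ x).ne'
  have hset : {x | f₀ x / f₁ x ≠ 1} = {x | f₁ x ≠ f₀ x} := by
    ext x
    simp [div_eq_one_iff_eq (hf₁ x).ne', eq_comm]
  have hlt := integral_log_lt_integral_sub_one (fun x => div_pos (hf₀ x) (hf₁ x)) hdiv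
    ((hlog₀.sub hlog₁).congr (ae_of_all _ fun x => (hlog_div x).symm)) (hset ▸ hne)
  rw [funext hlog_div, integral_sub hlog₀ hlog₁, hmean₀, hmean₁] at hlt
  linarith

end LogIntegral

theorem whittle_functional_identifiability_general {Θ : Type*} (d : ℕ) (θ₀ : Θ)
    (f : Θ → ℕ → (Fin d → ℝ) → ℝ)
    (hf_pos : ∀ θ k ω, 0 < f θ k ω)
    (hlog_int : ∀ θ k, Integrable (fun ω => Real.log (f θ k ω)) (normCube d))
    (hlog_zero : ∀ θ k, ∫ ω, Real.log (f θ k ω) ∂(normCube d) = 0)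
    (hratio_int : ∀ θ k, Integrable (fun ω => f θ₀ k ω / f θ k ω) (normCube d))
    (hident : ∀ θ, θ ≠ θ₀ → ∃ k, 0 < normCube d {ω | f θ k ω ≠ f θ₀ k ω})
    (W : Θ → ℝ≥0∞)
    (hW : ∀ θ, W θ = ⨆ k : ℕ, ENNReal.ofReal (∫ ω, f θ₀ k ω / f θ k ω ∂(normCube d))) :
    W θ₀ = 1 ∧ (∀ θ, θ ≠ θ₀ → 1 < W θ) ∧
      (⨅ θ, W θ) = 1 ∧ (∀ θ, W θ = 1 → θ = θ₀) := by
  have hW₀ : W θ₀ = 1 := by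
    simp [hW, fun k ω => div_self (hf_pos θ₀ k ω).ne']
  have hW_gt : ∀ θ, θ ≠ θ₀ → 1 < W θ := by
    intro θ hθ
    obtain ⟨k, hk⟩ := hident θ hθ
    have hlt := one_lt_integral_div_of_integral_log_eq_zero (hf_pos θ₀ k) (hf_pos θ k)
      (hlog_int θ₀ k) (hlog_int θ k) (hlog_zero θ₀ k) (hlog_zero θ k) (hratio_int θ k) hk
    rw [hW]
    exact lt_iSup_iff.2 ⟨k, ENNReal.one_lt_ofReal.2 hlt⟩
  refine ⟨hW₀, hW_gt, ?_, fun θ hθ => by_contra fun h => (hW_gt θ h).ne' hθ⟩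
  refine le_antisymm (iInf_le_of_le θ₀ hW₀.le) (le_iInf fun θ => ?_)
  by_cases h : θ = θ₀
  · rw [h, hW₀]
  · exact (hW_gt θ h).le

/-- Let `μ` be the normalized Lebesgue measure on `[-π,π]^d`, `Θ` a set with a
distinguished point `θ₀`, and for each `θ ∈ Θ`, `k ≥ 1`, let `f_{θ,k} : [-π,π]^d → (0,∞)` be
measurable with `log f_{θ,k}` integrable and `∫ log f_{θ,k} dμ = 0`; assume `f_{θ₀,k}/f_{θ,k}`
is μ-integrable, and identifiability: for `θ ≠ θ₀` there is `k` with
`μ{ω : f_{θ,k}(ω) ≠ f_{θ₀,k}(ω)} > 0`. Define `W(θ) = sup_k ∫ f_{θ₀,k}/f_{θ,k} dμ`. Then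
`W(θ₀) = 1`, `W(θ) > 1` for `θ ≠ θ₀`, and `inf_θ W(θ) = 1` is attained only at `θ₀`. -/
theorem whittle_functional_identifiability {Θ : Type*} (d : ℕ) (θ₀ : Θ)
    (f : Θ → ℕ → (Fin d → ℝ) → ℝ)
    (hf_meas : ∀ θ k, Measurable (f θ k))
    (hf_pos : ∀ θ k ω, 0 < f θ k ω)
    (hlog_int : ∀ θ k, Integrable (fun ω => Real.log (f θ k ω)) (normCube d))
    (hlog_zero : ∀ θ k, ∫ ω, Real.log (f θ k ω) ∂(normCube d) = 0)
    (hratio_int : ∀ θ k, Integrable (fun ω => f θ₀ k ω / f θ k ω) (normCube d))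
    (hident : ∀ θ, θ ≠ θ₀ → ∃ k, 0 < normCube d {ω | f θ k ω ≠ f θ₀ k ω})
    (W : Θ → ℝ≥0∞)
    (hW : ∀ θ, W θ = ⨆ k : ℕ, ENNReal.ofReal (∫ ω, f θ₀ k ω / f θ k ω ∂(normCube d))) :
    W θ₀ = 1 ∧ (∀ θ, θ ≠ θ₀ → 1 < W θ) ∧
      (⨅ θ, W θ) = 1 ∧ (∀ θ, W θ = 1 → θ = θ₀) :=
  whittle_functional_identifiability_general d θ₀ f hf_pos hlog_int hlog_zero hratio_int hident W hW
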